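/- arXiv:1702.02970 — 4 statements merged into one kernel-verified Lean document; each statement's English description precedes it below -/
import Mathlib

section
/- For every n, d ∈ ℕ and every λ ∈ (0,1), if X ∈ {±1}^{n×d} is drawn uniformly at random and d_λ = 2d·exp(−λ²·n/2), then P[ #{j ∈ [d] : q_j(X) > λ} > d_λ ] ≤ e^{−d_λ/6}. -/
open scoped ENNReal

noncomputable section

/-- The ±1 real value encoded by a Boolean (`true ↦ 1`, `false ↦ -1`). -/
def pmVal (b : Bool) : ℝ := if b then 1 else -1

/-- The `j`-th marginal of a dataset `X ∈ {±1}^{n×d}`. -/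
def marginal {n d : ℕ} (X : Fin n → Fin d → Bool) (j : Fin d) : ℝ :=
  (∑ i, pmVal (X i j)) / n

/-! The argument is exponential Markov, used twice. A column exceeds mean `λ` for at most a
fraction `e^{-λ²n/2}` of the `2^n` columns (tilt `λ`, and `cosh λ ≤ e^{λ²/2}`). Columns are
independent, so with tilt `log 2` the number of large columns exceeds `d_λ` with probability at
most `2^{-d_λ} (1 + e^{-λ²n/2})^d ≤ e^{-(log 2 - 1/2) d_λ}`, and `log 2 - 1/2 > 1/6`. -/

open Finset Real

theorem Finset.card_filter_lt_le_sum_exp {α : Type*} (s : Finset α) (f : α → ℝ) {a t : ℝ}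
    (ht : 0 ≤ t) : (#{x ∈ s | a < f x} : ℝ) ≤ ∑ x ∈ s, exp (t * (f x - a)) := by
  rw [card_eq_sum_ones, Nat.cast_sum, sum_filter]
  refine sum_le_sum fun x _ => ?_
  split_ifs with h
  · exact_mod_cast one_le_exp (mul_nonneg ht (sub_nonneg.2 h.le))
  · exact (exp_pos _).le

lemma sum_exp_mul_pmVal (t : ℝ) : ∑ b, exp (t * pmVal b) = 2 * cosh t := by
  simp only [Fintype.sum_bool, pmVal, if_true, Bool.false_eq_true, if_false, mul_one, mul_neg,
    cosh_eq]
  ring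

theorem card_filter_mul_lt_sum_pmVal_le (n : ℕ) {lam : ℝ} (hlam : 0 ≤ lam) :
    (#{c : Fin n → Bool | lam * n < ∑ i, pmVal (c i)} : ℝ) ≤
      2 ^ n * exp (-(lam ^ 2 * n) / 2) :=
  calc (#{c : Fin n → Bool | lam * n < ∑ i, pmVal (c i)} : ℝ)
      ≤ ∑ c : Fin n → Bool, exp (lam * (∑ i, pmVal (c i) - lam * n)) :=
        card_filter_lt_le_sum_exp _ _ hlam
    _ = exp (-(lam ^ 2 * n)) * (2 * cosh lam) ^ n := by
        rw [← sum_exp_mul_pmVal, Fintype.sum_pow, mul_sum]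
        refine sum_congr rfl fun c _ => ?_
        rw [← exp_sum, ← exp_add, ← mul_sum]
        ring_nf
    _ ≤ exp (-(lam ^ 2 * n)) * (2 * exp (lam ^ 2 / 2)) ^ n := by
        gcongr
        exact cosh_le_exp_half_sq lam
    _ = 2 ^ n * exp (-(lam ^ 2 * n) / 2) := by
        rw [mul_pow, ← exp_nat_mul, mul_left_comm, ← exp_add]
        ring_nf

theorem card_filter_lt_mean_pmVal_le (n : ℕ) {lam : ℝ} (hlam : 0 ≤ lam) :
    (#{c : Fin n → Bool | lam < (∑ i, pmVal (c i)) / n} : ℝ) ≤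
      2 ^ n * exp (-(lam ^ 2 * n) / 2) := by
  refine le_trans ?_ (card_filter_mul_lt_sum_pmVal_le n hlam)
  refine Nat.cast_le.2 (card_le_card (monotone_filter_right _ fun c _ hc => ?_))
  have hn : (0 : ℝ) < n := by
    refine (Nat.cast_nonneg n).lt_of_ne fun h => ?_
    rw [← h, div_zero] at hc
    linarith
  exact (lt_div_iff₀ hn).1 hc

lemma sum_two_pow_card_filter {β : Type*} [Fintype β] (P : β → Prop) [DecidablePred P]
    (d : ℕ) :
    ∑ g : Fin d → β, (2 : ℝ) ^ #{j | P (g j)} = (Fintype.card β + #{b | P b}) ^ d := by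
  have hweights : ∑ b, (if P b then 2 else 1 : ℝ) = Fintype.card β + #{b | P b} := by
    have hsplit : ∀ b, (if P b then 2 else 1 : ℝ) = 1 + if P b then 1 else 0 := fun b => by
      split_ifs <;> norm_num
    simp only [hsplit, sum_add_distrib, sum_const, sum_boole, card_univ, nsmul_one]
  rw [← hweights, Fintype.sum_pow]
  refine sum_congr rfl fun g _ => ?_
  rw [← prod_filter, prod_const]

theorem card_filter_two_mul_lt_card_filter_le {β : Type*} [Fintype β] (P : β → Prop)
    [DecidablePred P] (d : ℕ) {p : ℝ} (hp : 0 ≤ p)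
    (hP : (#{b | P b} : ℝ) ≤ p * Fintype.card β) :
    (#{g : Fin d → β | 2 * d * p < #{j | P (g j)}} : ℝ) ≤
      Fintype.card β ^ d * exp (-(2 * d * p) / 6) := by
  set N : ℝ := (Fintype.card β : ℝ)
  calc (#{g : Fin d → β | 2 * d * p < #{j | P (g j)}} : ℝ)
      ≤ ∑ g : Fin d → β, exp (log 2 * (#{j | P (g j)} - 2 * d * p)) :=
        card_filter_lt_le_sum_exp _ _ (log_nonneg one_le_two)
    _ = exp (-(log 2 * (2 * d * p))) * (N + #{b | P b}) ^ d := by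
        rw [← sum_two_pow_card_filter, mul_sum]
        refine sum_congr rfl fun g _ => ?_
        rw [mul_sub, sub_eq_neg_add, exp_add, mul_comm (log 2) (#_ : ℝ), exp_nat_mul,
          exp_log two_pos]
    _ ≤ exp (-(log 2 * (2 * d * p))) * (N * exp p) ^ d := by
        gcongr
        have hN : 0 ≤ N := Nat.cast_nonneg _
        nlinarith [add_one_le_exp p]
    _ = N ^ d * exp (-(log 2 * (2 * d * p)) + d * p) := by
        rw [mul_pow, ← exp_nat_mul, exp_add]
        ring
    _ ≤ N ^ d * exp (-(2 * d * p) / 6) := by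
        gcongr
        nlinarith [log_two_gt_d9, mul_nonneg (Nat.cast_nonneg d) hp]

theorem PMF.toOuterMeasure_uniformOfFintype_le_ofReal {α : Type*} [Fintype α] [Nonempty α]
    (s : Finset α) {r : ℝ} (h : (#s : ℝ) ≤ r * Fintype.card α) :
    (uniformOfFintype α).toOuterMeasure s ≤ ENNReal.ofReal r := by
  rw [toOuterMeasure_uniformOfFintype_apply]
  simp only [coe_sort_coe, Fintype.card_coe]
  rw [ENNReal.div_le_iff (by simp) (by simp), ← ENNReal.ofReal_natCast,
    ← ENNReal.ofReal_natCast (Fintype.card α), ← ENNReal.ofReal_mul' (by positivity)]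
  exact ENNReal.ofReal_le_ofReal h

/-- For a uniformly random `X ∈ {±1}^{n×d}` and `λ ∈ (0,1)`, the number of columns whose
marginal exceeds `λ` is at most `d_λ := 2d·e^{-λ²n/2}` except with probability
`e^{-d_λ/6}`. -/
theorem few_large_marginals (n d : ℕ) (lam : ℝ) (hlam : lam ∈ Set.Ioo (0:ℝ) 1)
    (dlam : ℝ) (hdlam : dlam = 2 * d * Real.exp (-(lam ^ 2 * n) / 2)) :
    (PMF.uniformOfFintype (Fin n → Fin d → Bool)).toOuterMeasure
        {X | dlam < ((Finset.univ.filter (fun j => lam < marginal X j)).card : ℝ)} ≤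
      ENNReal.ofReal (Real.exp (-dlam / 6)) := by
  rw [← coe_filter_univ]
  refine PMF.toOuterMeasure_uniformOfFintype_le_ofReal _ ?_
  have hcard : Fintype.card (Fin n → Bool) ^ d = Fintype.card (Fin n → Fin d → Bool) := by
    simp only [Fintype.card_fun, Fintype.card_bool, Fintype.card_fin, ← pow_mul, mul_comm]
  have htranspose : #{X | dlam < #{j | lam < marginal X j}} =
      #{g : Fin d → Fin n → Bool | dlam < #{j | lam < (∑ i, pmVal (g j i)) / n}} :=
    card_equiv (Equiv.piComm _) fun _ => by simp only [mem_filter_univ]; rfl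
  have hcolumns : (#{c : Fin n → Bool | lam < (∑ i, pmVal (c i)) / n} : ℝ) ≤
      exp (-(lam ^ 2 * n) / 2) * Fintype.card (Fin n → Bool) := by
    rw [mul_comm]
    simpa using card_filter_lt_mean_pmVal_le n hlam.1.le
  rw [htranspose, mul_comm, ← hcard, Nat.cast_pow, hdlam]
  exact card_filter_two_mul_lt_card_filter_le
    (fun c : Fin n → Bool => lam < (∑ i, pmVal (c i)) / n) d (by positivity) hcolumns
end
end

section
/- Let n ∈ ℕ and let s be an integer with |s| ≤ n and s ≡ n (mod 2). Let x = (x_1,…,x_n) be uniformly distributed over { z ∈ {±1}^n : Σ_{i=1}^n z_i = s }. Then for every subset B ⊆ [n], P[ for all b ∈ B, x_b = −1 ] ≤ Π_{b ∈ B} P[ x_b = −1 ]; that is, the entries of a uniformly random ±1 vector with fixed sum are positively correlated in the sense that the probability they are simultaneously −1 is at most the product of the individual probabilities. -/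
/-
Fixing the sum fixes the number `m` of entries equal to `-1`, so the set of positions of the
`-1` entries is a uniformly random `m`-subset `A` of `[n]`. Then `P[b ∈ A] = m / n`, while for
`|B| = k` we get `P[B ⊆ A] = C(n - k, m - k) / C(n, m) = ∏_{j < k} (m - j) / (n - j)`, and each
factor is at most `m / n`.
-/

open scoped ENNReal

noncomputable section

open Finset

lemma pmVal_eq_neg_one_iff (c : Bool) : pmVal c = -1 ↔ c = false := by
  cases c <;> norm_num [pmVal]

namespace Nat

lemma choose_sub_mul_pow_le {n m k : ℕ} (hk : k ≤ m) (hm : m ≤ n) :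
    (n - k).choose (m - k) * n ^ k ≤ n.choose m * m ^ k := by
  induction k with
  | zero => simp
  | succ k ih =>
    have hpascal :
        (n - k) * (n - (k + 1)).choose (m - (k + 1)) = (n - k).choose (m - k) * (m - k) := by
      obtain ⟨n', hn'⟩ : ∃ n', n - k = n' + 1 := ⟨n - (k + 1), by omega⟩
      obtain ⟨m', hm'⟩ : ∃ m', m - k = m' + 1 := ⟨m - (k + 1), by omega⟩
      rw [hn', hm', show n - (k + 1) = n' by omega, show m - (k + 1) = m' by omega]
      exact add_one_mul_choose_eq n' m'
    have hratio : (m - k) * n ≤ (n - k) * m := by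
      zify [show k ≤ m by omega, show k ≤ n by omega]
      nlinarith
    refine le_of_mul_le_mul_left ?_ (show 0 < n - k by omega)
    calc (n - k) * ((n - (k + 1)).choose (m - (k + 1)) * n ^ (k + 1))
        = (m - k) * n * ((n - k).choose (m - k) * n ^ k) := by rw [← mul_assoc, hpascal]; ring
      _ ≤ (n - k) * m * (n.choose m * m ^ k) := mul_le_mul' hratio (ih (by omega))
      _ = (n - k) * (n.choose m * m ^ (k + 1)) := by ring

end Nat

section PowersetCard

variable {α : Type*} [Fintype α] [DecidableEq α]

lemma card_powersetCard_univ_filter_mem_mul (a : α) (m : ℕ) :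
    #{A ∈ powersetCard m univ | a ∈ A} * Fintype.card α = (Fintype.card α).choose m * m := by
  cases m with
  | zero => simp
  | succ m =>
    obtain ⟨n, hn⟩ := Nat.exists_eq_add_one.2 (Fintype.card_pos_iff.2 ⟨a⟩)
    simp_rw [← singleton_subset_iff]
    rw [card_filter_powersetCard_subset _ _ _ (subset_univ _) (by simp), card_univ, hn]
    simpa [mul_comm] using Nat.add_one_mul_choose_eq n m

lemma card_powersetCard_univ_filter_subset_mul_pow_le (B : Finset α) (m : ℕ) :
    #{A ∈ powersetCard m univ | B ⊆ A} * Fintype.card α ^ #B ≤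
      (Fintype.card α).choose m * m ^ #B := by
  by_cases hB : #B ≤ m ∧ m ≤ Fintype.card α
  · rw [card_filter_powersetCard_subset _ _ _ (subset_univ _) hB.1, card_univ]
    exact Nat.choose_sub_mul_pow_le hB.1 hB.2
  · suffices {A ∈ powersetCard m (univ : Finset α) | B ⊆ A} = ∅ by simp [this]
    refine filter_eq_empty_iff.2 fun A hA hBA => hB ⟨?_, ?_⟩
    · exact (mem_powersetCard.1 hA).2 ▸ card_le_card hBA
    · exact (mem_powersetCard.1 hA).2 ▸ A.card_le_univ

end PowersetCard

namespace ENNReal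

lemma natCast_div_le_div_pow {a N c n k : ℕ} (hN : N ≠ 0) (hn : n ^ k ≠ 0)
    (h : a * n ^ k ≤ N * c ^ k) : (a : ℝ≥0∞) / N ≤ ((c : ℝ≥0∞) / n) ^ k := by
  rw [div_eq_mul_inv (c : ℝ≥0∞), mul_pow, ← ENNReal.inv_pow, ← div_eq_mul_inv,
    ENNReal.le_div_iff_mul_le (by exact_mod_cast Or.inl hn) (Or.inl (by simp)),
    ← ENNReal.mul_div_right_comm, ENNReal.div_le_iff (by exact_mod_cast hN) (by simp)]
  exact_mod_cast (mul_comm N _) ▸ h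

end ENNReal

section BoolVectors

variable {ι : Type*} [Fintype ι] [DecidableEq ι]

def falseSetEquiv : (ι → Bool) ≃ Finset ι where
  toFun z := {i | z i = false}
  invFun A i := decide (i ∉ A)
  left_inv z := by ext i; cases h : z i <;> simp [h]
  right_inv A := by ext i; simp

@[simp]
lemma mem_falseSetEquiv {z : ι → Bool} {i : ι} : i ∈ falseSetEquiv z ↔ z i = false := by
  simp [falseSetEquiv]

lemma sum_pmVal_eq (z : ι → Bool) :
    ∑ i, pmVal (z i) = Fintype.card ι - 2 * #(falseSetEquiv z) := by
  have h : ∀ i, pmVal (z i) = 1 - 2 * if z i = false then 1 else 0 := fun i => by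
    cases z i <;> norm_num [pmVal]
  simp_rw [h, sum_sub_distrib, ← mul_sum, sum_boole]
  simp [falseSetEquiv]

lemma sum_pmVal_eq_sum_pmVal_iff (z w : ι → Bool) :
    ∑ i, pmVal (z i) = ∑ i, pmVal (w i) ↔ #(falseSetEquiv z) = #(falseSetEquiv w) := by
  rw [sum_pmVal_eq, sum_pmVal_eq]
  constructor <;> intro h
  · exact_mod_cast (by linarith : (#(falseSetEquiv z) : ℝ) = #(falseSetEquiv w))
  · rw [h]

-- Classical decidability of `· ∈ t`, as in `PMF.toOuterMeasure_uniformOfFinset_apply`.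
open Classical in
lemma card_filter_falseSetEquiv (m : ℕ) {t : Set (ι → Bool)}
    {p : Finset ι → Prop} [DecidablePred p] (htp : ∀ z, z ∈ t ↔ p (falseSetEquiv z)) :
    #{z ∈ {z | #(falseSetEquiv z) = m} | z ∈ t} = #{A ∈ powersetCard m univ | p A} := by
  rw [filter_filter, powersetCard_eq_filter, powerset_univ, filter_filter]
  exact card_equiv falseSetEquiv (by simp [htp])

open PMF in
theorem toOuterMeasure_uniformOfFinset_card_falseSet_le_prod (m : ℕ)
    (h : ({z | #(falseSetEquiv z) = m} : Finset (ι → Bool)).Nonempty) (B : Finset ι) :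
    (uniformOfFinset _ h).toOuterMeasure {z | ∀ b ∈ B, z b = false} ≤
      ∏ b ∈ B, (uniformOfFinset _ h).toOuterMeasure {z | z b = false} := by
  set n := Fintype.card ι
  have hN : #({z | #(falseSetEquiv z) = m} : Finset (ι → Bool)) = n.choose m := by
    simpa using card_filter_falseSetEquiv (t := Set.univ) m (p := fun _ => True) (by simp)
  have hN0 : n.choose m ≠ 0 := hN ▸ h.card_pos.ne'
  have hsingle : ∀ b ∈ B, (uniformOfFinset _ h).toOuterMeasure {z | z b = false} = m / n := by
    intro b _
    have hn : n ≠ 0 := have : Nonempty ι := ⟨b⟩; Fintype.card_ne_zero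
    simp only [toOuterMeasure_uniformOfFinset_apply]
    rw [hN, ENNReal.div_eq_div_iff (by simpa) (by simp) (by simpa) (by simp),
      card_filter_falseSetEquiv m (p := (b ∈ ·)) (by simp), mul_comm]
    exact_mod_cast card_powersetCard_univ_filter_mem_mul b m
  rw [prod_congr rfl hsingle, prod_const]
  simp only [toOuterMeasure_uniformOfFinset_apply]
  rw [hN]
  refine ENNReal.natCast_div_le_div_pow hN0 ?_ ?_
  · rcases B.eq_empty_or_nonempty with rfl | ⟨b, -⟩
    · simp
    · have : Nonempty ι := ⟨b⟩
      exact pow_ne_zero _ Fintype.card_ne_zero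
  · rw [card_filter_falseSetEquiv m (p := (B ⊆ ·)) (by simp [subset_iff])]
    exact card_powersetCard_univ_filter_subset_mul_pow_le B m

end BoolVectors

theorem fixed_sum_positively_correlated_general (n : ℕ) (s : ℤ)
    (S : Finset (Fin n → Bool))
    (hS : S = Finset.univ.filter (fun z => ∑ i, pmVal (z i) = (s : ℝ)))
    (hSne : S.Nonempty) (B : Finset (Fin n)) :
    (PMF.uniformOfFinset S hSne).toOuterMeasure {x | ∀ b ∈ B, pmVal (x b) = -1} ≤
      ∏ b ∈ B, (PMF.uniformOfFinset S hSne).toOuterMeasure {x | pmVal (x b) = -1} := by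
  obtain ⟨z₀, hz₀⟩ := id hSne
  have hS' : S = ({z | #(falseSetEquiv z) = #(falseSetEquiv z₀)} : Finset _) := by
    subst hS
    ext z
    simp only [mem_filter, mem_univ, true_and] at hz₀ ⊢
    rw [← hz₀, sum_pmVal_eq_sum_pmVal_iff]
  subst hS'
  simp_rw [pmVal_eq_neg_one_iff]
  exact toOuterMeasure_uniformOfFinset_card_falseSet_le_prod _ hSne B

/-- The entries of a uniformly random ±1 vector with fixed sum `s` are positively
correlated: for every `B ⊆ [n]`, the probability that `x_b = -1` for all `b ∈ B` is at
most the product of the individual probabilities `P[x_b = -1]`. -/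
theorem fixed_sum_positively_correlated (n : ℕ) (s : ℤ)
    (hs : |s| ≤ (n : ℤ)) (hpar : s % 2 = (n : ℤ) % 2)
    (S : Finset (Fin n → Bool))
    (hS : S = Finset.univ.filter (fun z => ∑ i, pmVal (z i) = (s : ℝ)))
    (hSne : S.Nonempty) (B : Finset (Fin n)) :
    (PMF.uniformOfFinset S hSne).toOuterMeasure {x | ∀ b ∈ B, pmVal (x b) = -1} ≤
      ∏ b ∈ B, (PMF.uniformOfFinset S hSne).toOuterMeasure {x | pmVal (x b) = -1} :=
  fixed_sum_positively_correlated_general n s S hS hSne B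
end
end

section
/- Let n ∈ ℕ and let s ≥ 0 be an integer with s ≤ n and s ≡ n (mod 2). Let x = (x_1,…,x_n) be uniformly distributed over { z ∈ {±1}^n : Σ_{i=1}^n z_i = s }. Then for every subset B ⊆ [n] and every a ∈ [n] \ B such that the event { x_b = −1 for all b ∈ B } has positive probability, the conditional expectation satisfies E[ x_a | x_b = −1 for all b ∈ B ] ≥ s/n = E[x_a]. -/
/-!
Swapping two coordinates outside `B` preserves both the sum of the coordinates and the event
`{x_b = -1 for all b ∈ B}`, so on that event all `x_i` with `i ∉ B` have the same average.
Their sum is `s + |B|`, hence `E[x_a | x_b = -1, b ∈ B] = (s + |B|) / (n - |B|) ≥ s / n`;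
the case `B = ∅` gives `E[x_a] = s / n`.
-/

open scoped ENNReal

noncomputable section

open Finset

section SwapInvariant

variable {ι β M : Type*} [DecidableEq ι] [AddCommMonoid M] {T : Finset (ι → β)}

theorem sum_apply_eq_of_comp_swap_mem {a i : ι} (hT : ∀ z ∈ T, z ∘ Equiv.swap a i ∈ T)
    (f : β → M) : ∑ z ∈ T, f (z a) = ∑ z ∈ T, f (z i) :=
  sum_nbij' (· ∘ Equiv.swap a i) (· ∘ Equiv.swap a i) hT hT
    (fun z _ => by ext; simp) (fun z _ => by ext; simp) (fun z _ => by simp)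

theorem card_nsmul_sum_apply_eq_sum_sum {C : Finset ι} {a : ι}
    (hT : ∀ i ∈ C, ∀ z ∈ T, z ∘ Equiv.swap a i ∈ T) (f : β → M) :
    #C • ∑ z ∈ T, f (z a) = ∑ z ∈ T, ∑ i ∈ C, f (z i) := by
  rw [sum_comm, ← sum_const]
  exact sum_congr rfl fun i hi => sum_apply_eq_of_comp_swap_mem (hT i hi) f

end SwapInvariant

section FixedSum

variable {ι : Type*} [Fintype ι] [DecidableEq ι]

theorem sum_compl_pmVal_of_forall_mem {B : Finset ι} {z : ι → Bool}
    (hB : ∀ b ∈ B, pmVal (z b) = -1) :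
    ∑ i ∈ Bᶜ, pmVal (z i) = ∑ i, pmVal (z i) + #B := by
  rw [← sum_compl_add_sum B, sum_congr rfl hB]
  simp

theorem comp_swap_mem_of_notMem {s : ℝ} {B : Finset ι} {T : Finset (ι → Bool)}
    (hT : ∀ z, z ∈ T ↔ ∑ i, pmVal (z i) = s ∧ ∀ b ∈ B, pmVal (z b) = -1)
    {a i : ι} (ha : a ∉ B) (hi : i ∉ B) {z : ι → Bool} (hz : z ∈ T) :
    z ∘ Equiv.swap a i ∈ T := by
  rw [hT] at hz ⊢
  refine ⟨(Equiv.sum_comp _ fun j => pmVal (z j)).trans hz.1, fun b hb => ?_⟩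
  rw [Function.comp_apply, Equiv.swap_apply_of_ne_of_ne (ne_of_mem_of_not_mem hb ha)
    (ne_of_mem_of_not_mem hb hi)]
  exact hz.2 b hb

theorem card_compl_mul_sum_pmVal {s : ℝ} {B : Finset ι} {T : Finset (ι → Bool)}
    (hT : ∀ z, z ∈ T ↔ ∑ i, pmVal (z i) = s ∧ ∀ b ∈ B, pmVal (z b) = -1)
    {a : ι} (ha : a ∉ B) :
    (#Bᶜ : ℝ) * ∑ z ∈ T, pmVal (z a) = (s + #B) * #T := by
  have hsymm := card_nsmul_sum_apply_eq_sum_sum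
    (fun i hi z hz => comp_swap_mem_of_notMem hT ha (mem_compl.1 hi) hz) pmVal
  rw [nsmul_eq_mul] at hsymm
  rw [hsymm, sum_congr rfl fun z hz => ?_, sum_const, nsmul_eq_mul, mul_comm]
  obtain ⟨hsum, hB⟩ := (hT z).1 hz
  rw [sum_compl_pmVal_of_forall_mem hB, hsum]

end FixedSum

theorem conditional_expectation_fixed_sum_general (n : ℕ) (s : ℤ)
    (hs0 : 0 ≤ s)
    (S : Finset (Fin n → Bool))
    (hS : S = Finset.univ.filter (fun z => ∑ i, pmVal (z i) = (s : ℝ)))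
    (B : Finset (Fin n)) (a : Fin n) (ha : a ∉ B)
    (SB : Finset (Fin n → Bool))
    (hSB : SB = S.filter (fun z => ∀ b ∈ B, pmVal (z b) = -1))
    (hpos : SB.Nonempty) :
    (s : ℝ) / n ≤ (∑ z ∈ SB, pmVal (z a)) / SB.card ∧
    (∑ z ∈ S, pmVal (z a)) / S.card = (s : ℝ) / n := by
  have hSB_sum := card_compl_mul_sum_pmVal (T := SB) (s := s) (fun z => by simp [hSB, hS]) ha
  have hS_sum := card_compl_mul_sum_pmVal (T := S) (s := s) (B := ∅) (fun z => by simp [hS])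
    (notMem_empty a)
  simp only [compl_empty, card_univ, Fintype.card_fin, card_empty, Nat.cast_zero, add_zero]
    at hS_sum
  have hcard : (#Bᶜ : ℝ) + #B = n := by exact_mod_cast (card_compl_add_card B).trans (by simp)
  have hm : (0 : ℝ) < #Bᶜ := by exact_mod_cast card_pos.2 ⟨a, mem_compl.2 ha⟩
  have hcSB : (0 : ℝ) < #SB := by exact_mod_cast hpos.card_pos
  have hcS : (0 : ℝ) < #S := by
    exact_mod_cast (hpos.mono (hSB ▸ filter_subset _ S)).card_pos
  have hs : (0 : ℝ) ≤ s := by exact_mod_cast hs0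
  constructor
  · have hcond : (∑ z ∈ SB, pmVal (z a)) / #SB = (s + #B) / #Bᶜ := by
      rw [div_eq_div_iff hcSB.ne' hm.ne']
      linarith
    rw [hcond, div_le_div_iff₀ (by linarith) hm, ← hcard]
    nlinarith [Nat.cast_nonneg (α := ℝ) #B]
  · rw [div_eq_div_iff hcS.ne' (by linarith)]
    linarith

/-- Let `x` be uniform over `{z ∈ {±1}^n : Σᵢ zᵢ = s}` with `0 ≤ s ≤ n`, `s ≡ n (mod 2)`.
For every `B ⊆ [n]` and `a ∉ B` such that the event `{x_b = -1 for all b ∈ B}` has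
positive probability (i.e. the conditioned set `SB` is nonempty), the conditional
expectation of `x_a` given that event — the average of `x_a` over `SB` — is at least
`s/n`, which equals the unconditional expectation `E[x_a]` — the average of `x_a` over
`S`. -/
theorem conditional_expectation_fixed_sum (n : ℕ) (s : ℤ)
    (hs0 : 0 ≤ s) (hsn : s ≤ (n : ℤ)) (hpar : s % 2 = (n : ℤ) % 2)
    (S : Finset (Fin n → Bool))
    (hS : S = Finset.univ.filter (fun z => ∑ i, pmVal (z i) = (s : ℝ)))
    (B : Finset (Fin n)) (a : Fin n) (ha : a ∉ B)
    (SB : Finset (Fin n → Bool))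
    (hSB : SB = S.filter (fun z => ∀ b ∈ B, pmVal (z b) = -1))
    (hpos : SB.Nonempty) :
    (s : ℝ) / n ≤ (∑ z ∈ SB, pmVal (z a)) / SB.card ∧
    (∑ z ∈ S, pmVal (z a)) / S.card = (s : ℝ) / n :=
  conditional_expectation_fixed_sum_general n s hs0 S hS B a ha SB hSB hpos
end
end

section
/- Let n, k ∈ ℕ, let λ ∈ [0,1] with λ·n an integer having the same parity as n, and let ρ ∈ (0,1). Let X ∈ {±1}^{n×k} be a random matrix whose k columns are mutually independent, with each column uniformly distributed over { z ∈ {±1}^n : Σ_{i=1}^n z_i = λ·n }. Then for every subset R ⊆ [n], P[ Σ_{i ∈ R} Σ_{j=1}^{k} x_{ij} < |R|·( k·λ − √(2k·ln(1/ρ)) ) ] ≤ ρ^{|R|}. -/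
/-! Chernoff's method. Under the uniform measure on `T` the columns are independent, so the
moment generating function of `∑_{i ∈ R} ∑_j x_{ij}` is the `k`-th power of that of one column.
Inside a column the number of `true` entries is fixed, so the entries indexed by `R` form a
sample without replacement. Removing one row of `R` at a time and splitting the sets of `true`
rows according to whether they contain it exhibits the moment generating function as a
two-point mixture; Hoeffding's lemma then gives the same sub-Gaussian bound
`exp (θ |R| λ + θ² |R| / 2)` as for `|R|` independent `±1` entries of mean `λ`. Markov's
inequality with `θ = -√(2 ln (1/ρ) / k)` gives the tail bound `ρ ^ |R|`. -/

open scoped ENNReal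

noncomputable section

open Real Finset MeasureTheory ProbabilityTheory

lemma two_point_mgf_le {p x y : ℝ} (hp0 : 0 ≤ p) (hp1 : p ≤ 1) (hyx : y ≤ x) (hxy : x ≤ y + 1)
    (t : ℝ) :
    p * exp (t * x) + (1 - p) * exp (t * y) ≤ exp (t * (p * x + (1 - p) * y) + t ^ 2 / 8) := by
  set μ : Measure ℝ := Ber(x, y, ⟨p, hp0, hp1⟩)
  set m := p * x + (1 - p) * y
  have hsupp : ∀ᵐ ω ∂μ, ω ∈ Set.Icc y x :=
    bernoulliMeasure_apply_of_notMem_of_notMem _ measurableSet_Icc.compl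
      (by simp [hyx]) (by simp [hyx])
  have hmgf := (hasSubgaussianMGF_of_mem_Icc aemeasurable_id hsupp).mgf_le t
  have hmean : μ[id] = m := by simp [μ, m, integral_bernoulliMeasure]
  have hvar : ((‖x - y‖₊ / 2) ^ 2 : NNReal) * t ^ 2 / 2 ≤ t ^ 2 / 8 := by
    have : ‖x - y‖ ≤ 1 := by rw [Real.norm_of_nonneg (by linarith)]; linarith
    have h2 : ‖x - y‖ ^ 2 ≤ 1 := by nlinarith [norm_nonneg (x - y)]
    push_cast
    nlinarith [mul_le_mul_of_nonneg_right h2 (sq_nonneg t)]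
  rw [hmean] at hmgf
  simp only [mgf, id, μ, integral_bernoulliMeasure, smul_eq_mul] at hmgf
  calc p * exp (t * x) + (1 - p) * exp (t * y)
      = exp (t * m) * (p * exp (t * (x - m)) + (1 - p) * exp (t * (y - m))) := by
        simp only [mul_sub, exp_sub]; field_simp
    _ ≤ exp (t * m) * exp (t ^ 2 / 8) := by gcongr; exact hmgf.trans (exp_le_exp.2 hvar)
    _ = _ := (exp_add _ _).symm

lemma Finset.sum_powersetCard_succ_insert {α β : Type*} [DecidableEq α] [AddCommMonoid β]
    {i : α} {U : Finset α} (hi : i ∉ U) (m : ℕ) (f : Finset α → β) :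
    ∑ Z ∈ (insert i U).powersetCard (m + 1), f Z =
      ∑ Z ∈ U.powersetCard (m + 1), f Z + ∑ Z ∈ U.powersetCard m, f (insert i Z) := by
  have hnot : ∀ {l Z}, Z ∈ U.powersetCard l → i ∉ Z :=
    fun hZ h => hi ((mem_powersetCard.1 hZ).1 h)
  rw [powersetCard_succ_insert hi, sum_union, sum_image]
  · intro Z hZ Z' hZ' h
    rw [← erase_insert (hnot hZ), h, erase_insert (hnot hZ')]
  · simp only [disjoint_left, mem_image, not_exists, not_and]
    intro Z hZ Z' hZ' hZZ'
    exact hnot hZ (hZZ' ▸ mem_insert_self i Z')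

lemma hypergeometric_mgf_step {N r m : ℕ} (hr : r ≤ N) (hm : m ≤ N) (t : ℝ) :
    (N.choose (m + 1) : ℝ) * exp (t * (r * (m + 1) / N) + t ^ 2 * r / 8) +
        exp t * ((N.choose m : ℝ) * exp (t * (r * m / N) + t ^ 2 * r / 8)) ≤
      ((N + 1).choose (m + 1) : ℝ) *
        exp (t * ((r + 1) * (m + 1) / (N + 1)) + t ^ 2 * (r + 1) / 8) := by
  have hpascal : ((N + 1).choose (m + 1) : ℝ) = N.choose m + N.choose (m + 1) := by
    exact_mod_cast Nat.choose_succ_succ N m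
  have habsorb : ((N : ℝ) + 1) * N.choose m = (N + 1).choose (m + 1) * ((m : ℝ) + 1) := by
    exact_mod_cast Nat.add_one_mul_choose_eq N m
  set C : ℝ := ((N + 1).choose (m + 1) : ℝ)
  -- `p` is the chance that a uniform `(m+1)`-subset of `N+1` points contains a given point;
  -- `x` and `y` are the conditional means of the exponent given that it does or does not.
  set p : ℝ := (m + 1) / (N + 1)
  have hp0 : 0 ≤ p := by positivity
  have hp1 : p ≤ 1 := div_le_one_of_le₀ (by exact_mod_cast Nat.succ_le_succ hm) (by positivity)
  have hC_in : (N.choose m : ℝ) = p * C := by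
    simp only [p]
    field_simp
    linarith
  have hC_out : (N.choose (m + 1) : ℝ) = (1 - p) * C := by linarith
  set x : ℝ := 1 + r * m / N
  set y : ℝ := r * (m + 1) / N
  have hgap : x - y = 1 - r / N := by simp only [x, y]; ring
  have hyx : y ≤ x := by
    have : (r : ℝ) / N ≤ 1 := div_le_one_of_le₀ (by exact_mod_cast hr) (by positivity)
    linarith
  have hxy : x ≤ y + 1 := by
    have : (0 : ℝ) ≤ r / N := by positivity
    linarith
  have hmean : p * x + (1 - p) * y = (r + 1) * (m + 1) / (N + 1) := by
    rcases Nat.eq_zero_or_pos N with rfl | hN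
    · obtain rfl : r = 0 := Nat.le_zero.1 hr
      simp [x, y, p]
    · simp only [p, x, y]
      field_simp
      ring
  calc (N.choose (m + 1) : ℝ) * exp (t * (r * (m + 1) / N) + t ^ 2 * r / 8) +
        exp t * ((N.choose m : ℝ) * exp (t * (r * m / N) + t ^ 2 * r / 8))
      = C * exp (t ^ 2 * r / 8) * (p * exp (t * x) + (1 - p) * exp (t * y)) := by
        simp only [hC_in, hC_out, x, y, mul_add, mul_one, exp_add]
        ring
    _ ≤ C * exp (t ^ 2 * r / 8) * exp (t * (p * x + (1 - p) * y) + t ^ 2 / 8) := by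
        gcongr
        exact two_point_mgf_le hp0 hp1 hyx hxy t
    _ = C * exp (t * ((r + 1) * (m + 1) / (N + 1)) + t ^ 2 * (r + 1) / 8) := by
        rw [hmean, mul_assoc, ← exp_add]
        ring_nf

lemma sum_powersetCard_exp_card_inter_le {α : Type*} [DecidableEq α] (t : ℝ) {R U : Finset α}
    (hRU : R ⊆ U) (m : ℕ) :
    ∑ Z ∈ U.powersetCard m, exp (t * #(Z ∩ R)) ≤
      (#U).choose m * exp (t * (#R * m / #U) + t ^ 2 * #R / 8) := by
  induction R using Finset.induction_on generalizing U m with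
  | empty => simp
  | insert i R hiR ih =>
    have hiU : i ∈ U := hRU (mem_insert_self i R)
    set U' := U.erase i
    have hiU' : i ∉ U' := notMem_erase i U
    have hRU' : R ⊆ U' := fun j hj =>
      mem_erase.2 ⟨fun h => hiR (h ▸ hj), hRU (mem_insert_of_mem hj)⟩
    have hcardU : #U = #U' + 1 := (card_erase_add_one hiU).symm
    rcases lt_or_ge #U m with hUm | hmU
    · simp [powersetCard_eq_empty.2 hUm, Nat.choose_eq_zero_of_lt hUm]
    cases m with
    | zero => simpa using one_le_exp (by positivity)
    | succ m =>
      have hnot : ∀ {l Z}, Z ∈ U'.powersetCard l → i ∉ Z :=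
        fun hZ h => hiU' ((mem_powersetCard.1 hZ).1 h)
      have hout : ∑ Z ∈ U'.powersetCard (m + 1), exp (t * #(Z ∩ insert i R)) =
          ∑ Z ∈ U'.powersetCard (m + 1), exp (t * #(Z ∩ R)) :=
        sum_congr rfl fun Z hZ => by rw [inter_insert_of_notMem (hnot hZ)]
      have hin : ∑ Z ∈ U'.powersetCard m, exp (t * #(insert i Z ∩ insert i R)) =
          exp t * ∑ Z ∈ U'.powersetCard m, exp (t * #(Z ∩ R)) := by
        rw [mul_sum]
        refine sum_congr rfl fun Z hZ => ?_
        rw [← insert_inter_distrib, card_insert_of_notMem fun h => hnot hZ (mem_inter.1 h).1,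
          ← exp_add]
        push_cast
        ring_nf
      rw [← insert_erase hiU, sum_powersetCard_succ_insert hiU', hout, hin,
        card_insert_of_notMem hiU', card_insert_of_notMem hiR]
      push_cast
      calc _ ≤ ((#U').choose (m + 1) : ℝ) * exp (t * (#R * (m + 1) / #U') + t ^ 2 * #R / 8) +
            exp t * ((#U').choose m * exp (t * (#R * m / #U') + t ^ 2 * #R / 8)) := by
            gcongr
            · exact_mod_cast ih hRU' (m + 1)
            · exact ih hRU' m
        _ ≤ _ := hypergeometric_mgf_step (card_le_card hRU') (by omega) t

lemma sum_pmVal {ι : Type*} (S : Finset ι) (z : ι → Bool) :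
    ∑ i ∈ S, pmVal (z i) = 2 * #(S.filter fun i => z i) - #S := by
  simp only [pmVal, sum_ite, sum_const, nsmul_eq_mul, mul_one, mul_neg]
  have := S.card_filter_add_card_filter_not (fun i => z i)
  simp only [Bool.not_eq_true] at this ⊢
  rw [← this]
  push_cast
  ring

lemma sum_filter_card_eq_sum_powersetCard {ι β : Type*} [Fintype ι] [DecidableEq ι]
    [AddCommMonoid β] (m : ℕ) (f : Finset ι → β) :
    ∑ z ∈ univ.filter (fun z : ι → Bool => #(univ.filter fun i => z i) = m),
        f (univ.filter fun i => z i) =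
      ∑ Z ∈ univ.powersetCard m, f Z := by
  apply sum_nbij' (fun z => univ.filter fun i => z i) (fun Z i => decide (i ∈ Z))
  · intro z hz
    simpa using hz
  · intro Z hZ
    simpa using (mem_powersetCard.1 hZ).2
  · intro z _
    ext i
    simp
  · intro Z _
    ext i
    simp
  · intro z _
    rfl

lemma sum_exp_mul_sum_pmVal_le {ι : Type*} [Fintype ι] [DecidableEq ι] (R : Finset ι)
    (lam θ : ℝ) :
    ∑ z ∈ univ.filter (fun z : ι → Bool => ∑ i, pmVal (z i) = lam * Fintype.card ι),
        exp (θ * ∑ i ∈ R, pmVal (z i)) ≤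
      #(univ.filter fun z : ι → Bool => ∑ i, pmVal (z i) = lam * Fintype.card ι) *
        exp (θ * #R * lam + θ ^ 2 * #R / 2) := by
  set n := Fintype.card ι
  set A := univ.filter fun z : ι → Bool => ∑ i, pmVal (z i) = lam * n
  rcases A.eq_empty_or_nonempty with hA | ⟨z₀, hz₀⟩
  · simp [hA]
  set m := #(univ.filter fun i => z₀ i)
  have hm : 2 * (m : ℝ) - n = lam * n := by
    simpa [A, sum_pmVal] using hz₀
  have hA_eq : A = univ.filter (fun z : ι → Bool => #(univ.filter fun i => z i) = m) := by
    ext z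
    simp only [A, mem_filter, mem_univ, true_and, sum_pmVal, card_univ, ← hm]
    constructor
    · intro h; exact_mod_cast (by linarith : (#(univ.filter fun i => z i) : ℝ) = m)
    · intro h; rw [h]
  have hterm : ∀ z : ι → Bool, exp (θ * ∑ i ∈ R, pmVal (z i)) =
      exp (-(θ * #R)) * exp (2 * θ * #((univ.filter fun i => z i) ∩ R)) := by
    intro z
    rw [← exp_add, sum_pmVal, filter_inter, univ_inter]
    ring_nf
  have hcardA : #A = n.choose m := by
    simpa [hA_eq] using sum_filter_card_eq_sum_powersetCard (β := ℕ) m fun _ => 1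
  have hmean : θ * #R * lam = -(θ * #R) + 2 * θ * (#R * m / n) := by
    rcases Nat.eq_zero_or_pos n with hn | hn
    · have : #R = 0 := Nat.le_zero.1 (hn ▸ card_le_univ R)
      simp [this]
    · have : lam = 2 * m / n - 1 := by field_simp; linarith
      rw [this]; ring
  calc ∑ z ∈ A, exp (θ * ∑ i ∈ R, pmVal (z i))
      = exp (-(θ * #R)) * ∑ Z ∈ univ.powersetCard m, exp (2 * θ * #(Z ∩ R)) := by
        rw [sum_congr rfl fun z _ => hterm z, ← mul_sum, hA_eq,
          sum_filter_card_eq_sum_powersetCard m fun Z => exp (2 * θ * #(Z ∩ R))]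
    _ ≤ exp (-(θ * #R)) *
          (n.choose m * exp (2 * θ * (#R * m / n) + (2 * θ) ^ 2 * #R / 8)) := by
        gcongr
        simpa using sum_powersetCard_exp_card_inter_le (2 * θ) (subset_univ R) m
    _ = #A * exp (θ * #R * lam + θ ^ 2 * #R / 2) := by
        rw [hcardA, hmean, mul_left_comm, ← exp_add]
        ring_nf

lemma sum_filter_forall_prod_eq_pow {ι κ γ β : Type*} [Fintype ι] [DecidableEq ι] [Fintype κ]
    [DecidableEq κ] [Fintype γ] [CommSemiring β] (P : (ι → γ) → Prop) [DecidablePred P]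
    (f : (ι → γ) → β) :
    ∑ X ∈ univ.filter (fun X : ι → κ → γ => ∀ j, P fun i => X i j), ∏ j, f (fun i => X i j) =
      (∑ z ∈ univ.filter P, f z) ^ Fintype.card κ := by
  rw [← card_univ, ← prod_const, prod_univ_sum]
  refine sum_equiv (Equiv.piComm _) (fun X => ?_) (fun _ _ => rfl)
  simp only [mem_filter, mem_univ, true_and, Fintype.mem_piFinset]
  rfl

lemma sum_exp_mul_sum_rows_le {ι κ : Type*} [Fintype ι] [DecidableEq ι] [Fintype κ]
    [DecidableEq κ] (R : Finset ι) (lam θ : ℝ) :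
    ∑ X ∈ univ.filter (fun X : ι → κ → Bool => ∀ j, ∑ i, pmVal (X i j) = lam * Fintype.card ι),
        exp (θ * ∑ i ∈ R, ∑ j, pmVal (X i j)) ≤
      #(univ.filter fun X : ι → κ → Bool => ∀ j, ∑ i, pmVal (X i j) = lam * Fintype.card ι) *
        exp (Fintype.card κ * (θ * #R * lam + θ ^ 2 * #R / 2)) := by
  set P := fun z : ι → Bool => ∑ i, pmVal (z i) = lam * Fintype.card ι
  have hcard := sum_filter_forall_prod_eq_pow (κ := κ) P fun _ => (1 : ℝ)
  simp only [prod_const_one, sum_const, nsmul_eq_mul, mul_one] at hcard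
  calc _ = ∑ X ∈ univ.filter (fun X : ι → κ → Bool => ∀ j, P fun i => X i j),
          ∏ j, exp (θ * ∑ i ∈ R, pmVal (X i j)) := by
        refine sum_congr rfl fun X _ => ?_
        rw [← exp_sum, sum_comm, mul_sum]
    _ = (∑ z ∈ univ.filter P, exp (θ * ∑ i ∈ R, pmVal (z i))) ^ Fintype.card κ :=
        sum_filter_forall_prod_eq_pow P fun z => exp (θ * ∑ i ∈ R, pmVal (z i))
    _ ≤ (#(univ.filter P) * exp (θ * #R * lam + θ ^ 2 * #R / 2)) ^ Fintype.card κ := by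
        gcongr
        exact sum_exp_mul_sum_pmVal_le R lam θ
    _ = _ := by
        rw [mul_pow, ← exp_nat_mul, ← hcard]

lemma card_filter_lt_le_exp_mul_sum_exp {α : Type*} (T : Finset α) (Y : α → ℝ) (a : ℝ) {s : ℝ}
    (hs : 0 ≤ s) :
    (#(T.filter fun x => Y x < a) : ℝ) ≤ exp (s * a) * ∑ x ∈ T, exp (-s * Y x) := by
  rw [card_filter, Nat.cast_sum, mul_sum]
  refine sum_le_sum fun x _ => ?_
  rw [← exp_add]
  split_ifs with hx
  · exact_mod_cast one_le_exp (by nlinarith)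
  · exact_mod_cast (exp_pos _).le

lemma PMF.toOuterMeasure_uniformOfFinset_le_ofReal {α : Type*} {T : Finset α} (hT : T.Nonempty)
    (P : α → Prop) [DecidablePred P] {c : ℝ} (h : (#(T.filter P) : ℝ) ≤ c * #T) :
    (PMF.uniformOfFinset T hT).toOuterMeasure {x | P x} ≤ ENNReal.ofReal c := by
  classical
  have hc : 0 ≤ c := by
    have : (0 : ℝ) < #T := by exact_mod_cast hT.card_pos
    nlinarith [(#(T.filter P)).cast_nonneg (α := ℝ)]
  rw [PMF.toOuterMeasure_uniformOfFinset_apply, ENNReal.div_le_iff (by simpa using hT.ne_empty)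
    (ENNReal.natCast_ne_top _), ← ENNReal.ofReal_natCast, ← ENNReal.ofReal_natCast,
    ← ENNReal.ofReal_mul hc]
  apply ENNReal.ofReal_le_ofReal
  simpa using h

theorem correlated_sum_bound_general (n k : ℕ)
    (lam : ℝ)
    (ρ : ℝ) (hρ : ρ ∈ Set.Ioo (0:ℝ) 1)
    (T : Finset (Fin n → Fin k → Bool))
    (hT : T = Finset.univ.filter (fun X => ∀ j : Fin k, ∑ i, pmVal (X i j) = lam * n))
    (hTne : T.Nonempty) (R : Finset (Fin n)) :
    (PMF.uniformOfFinset T hTne).toOuterMeasure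
        {X | ∑ i ∈ R, ∑ j, pmVal (X i j) <
              (R.card : ℝ) * (k * lam - Real.sqrt (2 * k * Real.log (1 / ρ)))} ≤
      ENNReal.ofReal (ρ ^ R.card) := by
  obtain ⟨hρ0, hρ1⟩ := hρ
  rcases Nat.eq_zero_or_pos k with rfl | hk
  · simp
  set L := log (1 / ρ)
  have hL : 0 < L := log_pos (one_lt_one_div hρ0 hρ1)
  set s := √(2 * k * L) / k
  have hexponent : s * (#R * (k * lam - √(2 * k * L))) +
      k * (-s * #R * lam + (-s) ^ 2 * #R / 2) = #R * log ρ := by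
    have hc : √(2 * k * L) ^ 2 = 2 * k * L := sq_sqrt (by positivity)
    have hLρ : L = -log ρ := by simp [L]
    simp only [s]
    field_simp
    linear_combination (-(#R : ℝ)) * hc - 2 * k * #R * hLρ
  apply PMF.toOuterMeasure_uniformOfFinset_le_ofReal hTne
  calc _ ≤ exp (s * (#R * (k * lam - √(2 * k * L)))) *
        ∑ X ∈ T, exp (-s * ∑ i ∈ R, ∑ j, pmVal (X i j)) :=
        card_filter_lt_le_exp_mul_sum_exp T _ _ (by positivity)
    _ ≤ exp (s * (#R * (k * lam - √(2 * k * L)))) *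
        (#T * exp (k * (-s * #R * lam + (-s) ^ 2 * #R / 2))) := by
        gcongr
        subst hT
        simpa using sum_exp_mul_sum_rows_le (κ := Fin k) R lam (-s)
    _ = ρ ^ #R * #T := by
        rw [mul_left_comm, ← exp_add, hexponent, exp_nat_mul, exp_log hρ0, mul_comm]

/-- Hoeffding bound for positively correlated entries: let the `k` columns of
`X ∈ {±1}^{n×k}` be mutually independent, each uniform over
`{z ∈ {±1}^n : Σᵢ zᵢ = λn}` (equivalently, `X` is uniform over the set `T` of matrices
all of whose column sums equal `λn`). Then for every `R ⊆ [n]`,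
`P[Σ_{i ∈ R} Σ_{j=1}^k x_{ij} < |R|·(kλ - √(2k·ln(1/ρ)))] ≤ ρ^{|R|}`. -/
theorem correlated_sum_bound (n k : ℕ)
    (lam : ℝ) (hlam : lam ∈ Set.Icc (0:ℝ) 1)
    (hint : ∃ s : ℤ, (lam * n : ℝ) = (s : ℝ) ∧ s % 2 = (n : ℤ) % 2)
    (ρ : ℝ) (hρ : ρ ∈ Set.Ioo (0:ℝ) 1)
    (T : Finset (Fin n → Fin k → Bool))
    (hT : T = Finset.univ.filter (fun X => ∀ j : Fin k, ∑ i, pmVal (X i j) = lam * n))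
    (hTne : T.Nonempty) (R : Finset (Fin n)) :
    (PMF.uniformOfFinset T hTne).toOuterMeasure
        {X | ∑ i ∈ R, ∑ j, pmVal (X i j) <
              (R.card : ℝ) * (k * lam - Real.sqrt (2 * k * Real.log (1 / ρ)))} ≤
      ENNReal.ofReal (ρ ^ R.card) :=
  correlated_sum_bound_general n k lam ρ hρ T hT hTne R
end
end
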